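/- Let (Ω, 𝔽, P) be a probability space and γ ∈ (0,1). Let h : ℝⁿ → ℝ, let K : ℝ → ℝ be Lipschitz with K(0) = 0, let a : ℝⁿ → ℝ be Lipschitz with constant c_a, let b : ℝⁿ → ℝᵐ be Lipschitz with constant c_b, and suppose K ∘ h is Lipschitz with constant c_κ. Fix t_k ∈ ℝ, ΔT > 0, B_u > 0, and set η := ΔT · L_x · (c_a + c_b·B_u + c_κ). For each ω ∈ Ω let u(ω) ∈ ℝᵐ with ‖u(ω)‖ ≤ B_u and let x(·, ω) : ℝ → ℝⁿ be Lipschitz with constant L_x such that for every t ∈ [t_k, t_k + ΔT] the map t ↦ h(x(t, ω)) is differentiable at t with derivative a(x(t,ω)) + ⟨b(x(t,ω)), u(ω)⟩, and h(x(t_k, ω)) ≥ 0. Suppose the events A := {ω : a(x(t_k,ω)) + ⟨b(x(t_k,ω)), u(ω)⟩ + K(h(x(t_k,ω))) ≥ η} and E := {ω : h(x(t,ω)) ≥ 0 for all t ∈ [t_k, t_k+ΔT]} are measurable, and that P(A) ≥ 1 − γ. Then P(E) ≥ 1 − γ. -/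

import Mathlib

/-!
On each sample path where the robust condition `A` holds, Lipschitz continuity of `a`, `b`,
`K ∘ h` and of the trajectory shows that over a window of length `ΔT` the drift
`a + ⟪b, u⟫ + K ∘ h` drops by at most the margin `η`, so it stays nonnegative; hence
`d/dt h(x(t)) ≥ -K(h(x(t)))` on the whole window. A fencing argument then keeps `h(x(t))`
nonnegative, so `A ⊆ E` and `P(E) ≥ P(A) ≥ 1 - γ`.
-/

open scoped RealInnerProductSpace NNReal
open Set

lemma nonneg_of_forall_norm_sub_le_mul {E F : Type*} [NormedAddCommGroup E] [Nontrivial E]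
    [SeminormedAddCommGroup F] {f : E → F} {c : ℝ}
    (hf : ∀ p q, ‖f p - f q‖ ≤ c * ‖p - q‖) : 0 ≤ c := by
  obtain ⟨p, q, hpq⟩ := exists_pair_ne E
  exact nonneg_of_mul_nonneg_left ((norm_nonneg _).trans (hf p q))
    (norm_pos_iff.2 (sub_ne_zero.2 hpq))

lemma LipschitzWith.abs_le_mul_abs_of_map_zero {K : ℝ → ℝ} {cK : ℝ≥0} (hK : LipschitzWith cK K)
    (hK0 : K 0 = 0) (y : ℝ) : |K y| ≤ cK * |y| := by
  simpa [Real.dist_eq, hK0] using hK.dist_le_mul y 0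

theorem nonneg_of_neg_comp_le_deriv {K φ φ' : ℝ → ℝ} {cK : ℝ≥0} (hK : LipschitzWith cK K)
    (hK0 : K 0 = 0) {t₀ t₁ : ℝ} (hφ : ContinuousOn φ (Icc t₀ t₁))
    (hφ' : ∀ s ∈ Ico t₀ t₁, HasDerivWithinAt φ (φ' s) (Ici s) s) (h₀ : 0 ≤ φ t₀)
    (bound : ∀ s ∈ Ico t₀ t₁, -K (φ s) ≤ φ' s) : ∀ t ∈ Icc t₀ t₁, 0 ≤ φ t := by
  intro t ht
  refine neg_nonpos.1 (le_of_forall_pos_le_add fun δ hδ => ?_)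
  -- the fence `δ e^{(cK + 1)(s - t)}` grows strictly faster than `-φ` can at a contact point
  set B : ℝ → ℝ := fun s => δ * Real.exp ((cK + 1) * (s - t))
  have hB_pos : ∀ s, 0 < B s := fun s => by positivity
  have hB_deriv : ∀ s, HasDerivAt B ((cK + 1) * B s) s := fun s =>
    ((((hasDerivAt_id s).sub_const t).const_mul ((cK : ℝ) + 1)).exp.const_mul δ).congr_deriv
      (by simp only [B, id]; ring)
  have hfence := image_le_of_deriv_right_lt_deriv_boundary (f := fun s => -φ s) hφ.neg
    (fun s hs => (hφ' s hs).neg) (by linarith [hB_pos t₀]) hB_deriv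
    (fun s hs hcontact => by
      have hK_le : K (φ s) ≤ cK * B s := by
        calc K (φ s) ≤ |K (φ s)| := le_abs_self _
          _ ≤ cK * |φ s| := hK.abs_le_mul_abs_of_map_zero hK0 _
          _ = cK * B s := by rw [← abs_neg, hcontact, abs_of_pos (hB_pos s)]
      linarith [bound s hs, hB_pos s]) ht
  simpa [B] using hfence

section RobustCBF

variable {E F : Type*} [NormedAddCommGroup E] [NormedAddCommGroup F] [InnerProductSpace ℝ F]
  {h a : E → ℝ} {b : E → F} {K : ℝ → ℝ} {c_a c_b c_κ : ℝ}

lemma cbf_drift_le_add_mul_norm_sub {B : ℝ} (ha : ∀ p q, |a p - a q| ≤ c_a * ‖p - q‖)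
    (hb : ∀ p q, ‖b p - b q‖ ≤ c_b * ‖p - q‖) (hκ : ∀ p q, |K (h p) - K (h q)| ≤ c_κ * ‖p - q‖)
    {u : F} (hu : ‖u‖ ≤ B) (p q : E) :
    a p + ⟪b p, u⟫ + K (h p) ≤ a q + ⟪b q, u⟫ + K (h q) + (c_a + c_b * B + c_κ) * ‖p - q‖ := by
  have hinner : |⟪b p, u⟫ - ⟪b q, u⟫| ≤ c_b * ‖p - q‖ * B := by
    rw [← inner_sub_left]
    calc |⟪b p - b q, u⟫| ≤ ‖b p - b q‖ * ‖u‖ := abs_real_inner_le_norm _ _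
      _ ≤ c_b * ‖p - q‖ * B :=
        mul_le_mul (hb p q) hu (norm_nonneg _) ((norm_nonneg _).trans (hb p q))
  linarith [(abs_le.1 (ha p q)).2, (abs_le.1 hinner).2, (abs_le.1 (hκ p q)).2]

theorem nonneg_of_robust_cbf {cK : ℝ≥0} (hK : LipschitzWith cK K) (hK0 : K 0 = 0)
    (ha : ∀ p q, |a p - a q| ≤ c_a * ‖p - q‖) (hb : ∀ p q, ‖b p - b q‖ ≤ c_b * ‖p - q‖)
    (hκ : ∀ p q, |K (h p) - K (h q)| ≤ c_κ * ‖p - q‖) {t₀ T B L : ℝ} {u : F} (hu : ‖u‖ ≤ B)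
    {x : ℝ → E} (hx : ∀ s t : ℝ, ‖x s - x t‖ ≤ L * |s - t|)
    (hderiv : ∀ t ∈ Icc t₀ (t₀ + T), HasDerivAt (fun s => h (x s)) (a (x t) + ⟪b (x t), u⟫) t)
    (h₀ : 0 ≤ h (x t₀))
    (hcbf : T * L * (c_a + c_b * B + c_κ) ≤ a (x t₀) + ⟪b (x t₀), u⟫ + K (h (x t₀))) :
    ∀ t ∈ Icc t₀ (t₀ + T), 0 ≤ h (x t) := by
  -- over a trivial `E` the constants `c_a, c_b, c_κ, L` may be negative, but `x` is constant
  rcases subsingleton_or_nontrivial E with hE | hE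
  · intro t _
    rwa [Subsingleton.elim (x t) (x t₀)]
  have hc_a := nonneg_of_forall_norm_sub_le_mul (f := a) (by simpa only [Real.norm_eq_abs] using ha)
  have hc_b := nonneg_of_forall_norm_sub_le_mul hb
  have hc_κ := nonneg_of_forall_norm_sub_le_mul (f := K ∘ h)
    (by simpa only [Function.comp, Real.norm_eq_abs] using hκ)
  have hB : 0 ≤ B := (norm_nonneg u).trans hu
  have hL := nonneg_of_forall_norm_sub_le_mul (f := x) (by simpa only [Real.norm_eq_abs] using hx)
  refine nonneg_of_neg_comp_le_deriv hK hK0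
    (fun t ht => (hderiv t ht).continuousAt.continuousWithinAt)
    (fun t ht => (hderiv t (Ico_subset_Icc_self ht)).hasDerivWithinAt) h₀ fun s hs => ?_
  have hdist : ‖x t₀ - x s‖ ≤ T * L := by
    calc ‖x t₀ - x s‖ ≤ L * |t₀ - s| := hx _ _
      _ ≤ L * T := by
        gcongr
        rw [abs_sub_comm, abs_of_nonneg (by linarith [hs.1])]
        linarith [hs.2]
      _ = T * L := mul_comm _ _
  have hdrift := cbf_drift_le_add_mul_norm_sub ha hb hκ hu (x t₀) (x s)
  have hmargin : (c_a + c_b * B + c_κ) * ‖x t₀ - x s‖ ≤ (c_a + c_b * B + c_κ) * (T * L) :=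
    mul_le_mul_of_nonneg_left hdist (by positivity)
  linarith

end RobustCBF

open MeasureTheory

theorem stmt4_general {Ω : Type*} [MeasurableSpace Ω] (P : Measure Ω)
    (γ : ℝ)
    {n m : ℕ}
    (h : EuclideanSpace ℝ (Fin n) → ℝ)
    (K : ℝ → ℝ) (cK : ℝ≥0) (hK : LipschitzWith cK K) (hK0 : K 0 = 0)
    (a : EuclideanSpace ℝ (Fin n) → ℝ)
    (b : EuclideanSpace ℝ (Fin n) → EuclideanSpace ℝ (Fin m))
    (c_a c_b c_κ L_x : ℝ)
    (ha : ∀ p q, |a p - a q| ≤ c_a * ‖p - q‖)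
    (hb : ∀ p q, ‖b p - b q‖ ≤ c_b * ‖p - q‖)
    (hκ : ∀ p q, |K (h p) - K (h q)| ≤ c_κ * ‖p - q‖)
    (t_k ΔT B_u : ℝ)
    (u : Ω → EuclideanSpace ℝ (Fin m))
    (x : ℝ → Ω → EuclideanSpace ℝ (Fin n))
    (hu : ∀ ω, ‖u ω‖ ≤ B_u)
    (hx : ∀ ω, ∀ s t : ℝ, ‖x s ω - x t ω‖ ≤ L_x * |s - t|)
    (hderiv : ∀ ω, ∀ t ∈ Set.Icc t_k (t_k + ΔT),
      HasDerivAt (fun s => h (x s ω)) (a (x t ω) + ⟪b (x t ω), u ω⟫) t)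
    (hsafe0 : ∀ ω, 0 ≤ h (x t_k ω))
    (A E : Set Ω)
    (hA : A = {ω | a (x t_k ω) + ⟪b (x t_k ω), u ω⟫ + K (h (x t_k ω)) ≥
      ΔT * L_x * (c_a + c_b * B_u + c_κ)})
    (hE : E = {ω | ∀ t ∈ Set.Icc t_k (t_k + ΔT), 0 ≤ h (x t ω)})
    (hPA : ENNReal.ofReal (1 - γ) ≤ P A) :
    ENNReal.ofReal (1 - γ) ≤ P E := by
  have hAE : A ⊆ E := by
    subst hA hE
    exact fun ω hω => nonneg_of_robust_cbf hK hK0 ha hb hκ (hu ω) (hx ω) (hderiv ω) (hsafe0 ω) hω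
  exact hPA.trans (measure_mono hAE)

/-- Probabilistic safety guarantee (Lemma 2 of the paper): if for each random
outcome `ω` (encoding the stochastic human action) the analytic hypotheses of
the Robust CBF lemma hold, and the robust CBF condition at `t_k` (event `A`)
holds with probability at least `1 − γ`, then the trajectory stays in the safe
set on `[t_k, t_k + ΔT]` (event `E`) with probability at least `1 − γ`. -/
theorem stmt4 {Ω : Type*} [MeasurableSpace Ω] (P : Measure Ω) [IsProbabilityMeasure P]
    (γ : ℝ) (hγ : γ ∈ Set.Ioo (0 : ℝ) 1)
    {n m : ℕ}
    (h : EuclideanSpace ℝ (Fin n) → ℝ)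
    (K : ℝ → ℝ) (cK : ℝ≥0) (hK : LipschitzWith cK K) (hK0 : K 0 = 0)
    (a : EuclideanSpace ℝ (Fin n) → ℝ)
    (b : EuclideanSpace ℝ (Fin n) → EuclideanSpace ℝ (Fin m))
    (c_a c_b c_κ L_x : ℝ)
    (ha : ∀ p q, |a p - a q| ≤ c_a * ‖p - q‖)
    (hb : ∀ p q, ‖b p - b q‖ ≤ c_b * ‖p - q‖)
    (hκ : ∀ p q, |K (h p) - K (h q)| ≤ c_κ * ‖p - q‖)
    (t_k ΔT B_u : ℝ) (hΔT : 0 < ΔT) (hBu : 0 < B_u)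
    (u : Ω → EuclideanSpace ℝ (Fin m))
    (x : ℝ → Ω → EuclideanSpace ℝ (Fin n))
    (hu : ∀ ω, ‖u ω‖ ≤ B_u)
    (hx : ∀ ω, ∀ s t : ℝ, ‖x s ω - x t ω‖ ≤ L_x * |s - t|)
    (hderiv : ∀ ω, ∀ t ∈ Set.Icc t_k (t_k + ΔT),
      HasDerivAt (fun s => h (x s ω)) (a (x t ω) + ⟪b (x t ω), u ω⟫) t)
    (hsafe0 : ∀ ω, 0 ≤ h (x t_k ω))
    (A E : Set Ω)
    (hA : A = {ω | a (x t_k ω) + ⟪b (x t_k ω), u ω⟫ + K (h (x t_k ω)) ≥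
      ΔT * L_x * (c_a + c_b * B_u + c_κ)})
    (hE : E = {ω | ∀ t ∈ Set.Icc t_k (t_k + ΔT), 0 ≤ h (x t ω)})
    (hAmeas : MeasurableSet A) (hEmeas : MeasurableSet E)
    (hPA : ENNReal.ofReal (1 - γ) ≤ P A) :
    ENNReal.ofReal (1 - γ) ≤ P E :=
  stmt4_general P γ h K cK hK hK0 a b c_a c_b c_κ L_x ha hb hκ t_k ΔT B_u u x hu hx hderiv hsafe0 A
    E hA hE hPA
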